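/- Let R be a commutative ring and n a natural number. The polynomial algebra MvPolynomial (Fin n) R is a finitely presented object of the category CommAlgCat R of commutative R-algebras: the functor Hom_{CommAlgCat R}(MvPolynomial (Fin n) R, −) preserves filtered colimits. -/

import Mathlib

open CategoryTheory Limits Opposite

universe u

/-- An object `A` of a category `𝒞` is *finitely presented* if the hom-functor
`Hom_𝒞(A, −)` preserves filtered colimits. -/
def CategoryTheory.IsFinitelyPresentedObj {C : Type*} [Category C] (A : C) : Prop :=
  PreservesFilteredColimits (coyoneda.obj (op A))

/-- The category of commutative `R`-algebras, realized as the full subcategory of the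
category `AlgebraCat R` of `R`-algebras consisting of the commutative ones. -/
abbrev CommAlgCat' (R : Type u) [CommRing R] :=
  CategoryTheory.ObjectProperty.FullSubcategory (fun A : AlgCat.{u} R => ∀ x y : A, x * y = y * x)

/-- A commutative algebra `A`, as an object of `CommAlgCat R`. -/
abbrev CommAlgCat'.of (R : Type u) [CommRing R] (A : Type u) [CommRing A] [Algebra R A] :
    CommAlgCat' R :=
  ⟨AlgCat.of R A, fun x y => mul_comm x y⟩

/-!
A homomorphism out of `MvPolynomial σ R` is the same as a `σ`-tuple of elements of the target,
so `Hom(MvPolynomial σ R, −)` is the forgetful functor to types followed by `Hom_Type(σ, −)`.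
Both preserve filtered colimits: the forgetful functor because commutative algebras are closed
under filtered colimits of algebras, which are computed on underlying types; `Hom_Type(σ, −)`
because `σ` is finite.
-/

namespace CategoryTheory

theorem IsFinitelyPresentedObj.of_iso {C : Type*} [Category C] {A B : C} (e : A ≅ B)
    (h : IsFinitelyPresentedObj A) : IsFinitelyPresentedObj B :=
  have : PreservesFilteredColimits (coyoneda.obj (op A)) := h
  ⟨fun _ => preservesColimitsOfShape_of_natIso (coyoneda.mapIso e.op).symm⟩

theorem isFinitelyPresentedObj_of_finite (X : Type u) [Finite X] : IsFinitelyPresentedObj X :=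
  have := Cardinal.fact_isRegular_aleph0
  isFinitelyPresentable_iff_preservesFilteredColimits.mp
    (HasCardinalLT.isCardinalPresentable ((hasCardinalLT_aleph0_iff X).mpr ‹_›))

end CategoryTheory

namespace CommAlgCat'

variable (R : Type u) [CommRing R]

instance (A : CommAlgCat' R) : CommRing A.obj :=
  { A.obj.isRing with mul_comm := A.property }

instance isClosedUnderColimitsOfShape_of_isFiltered (J : Type u) [SmallCategory J]
    [IsFiltered J] :
    ObjectProperty.IsClosedUnderColimitsOfShape
      (fun A : AlgCat.{u} R => ∀ x y : A, x * y = y * x) J where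
  colimitsOfShape_le := by
    rintro A ⟨p⟩ x y
    have hc := isColimitOfPreserves (forget (AlgCat.{u} R)) p.isColimit
    obtain ⟨j, x, y, rfl, rfl⟩ := Types.FilteredColimit.jointly_surjective_of_isColimit₂ hc x y
    change (p.ι.app j).hom x * (p.ι.app j).hom y = (p.ι.app j).hom y * (p.ι.app j).hom x
    rw [← map_mul, ← map_mul, p.prop_diag_obj j x y]

instance preservesFilteredColimits_ι :
    PreservesFilteredColimits (ObjectProperty.ι _ : CommAlgCat' R ⥤ AlgCat.{u} R) :=
  ⟨fun _ _ _ => inferInstance⟩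

noncomputable def mvPolynomialHomEquiv (σ : Type u) (A : CommAlgCat' R) :
    (of R (MvPolynomial σ R) ⟶ A) ≃ (σ → A.obj) where
  toFun φ i := φ.hom.hom (MvPolynomial.X i)
  invFun x := ObjectProperty.homMk (AlgCat.ofHom (MvPolynomial.aeval x))
  left_inv φ :=
    ObjectProperty.hom_ext _ (AlgCat.hom_ext R (MvPolynomial.algHom_ext fun i => by simp))
  right_inv x := by ext; simp

noncomputable def coyonedaMvPolynomialIso (σ : Type u) :
    coyoneda.obj (op (of R (MvPolynomial σ R))) ≅
      ObjectProperty.ι _ ⋙ forget (AlgCat.{u} R) ⋙ coyoneda.obj (op σ) :=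
  NatIso.ofComponents fun A => ((mvPolynomialHomEquiv R σ A).trans TypeCat.homEquiv.symm).toIso

theorem isFinitelyPresentedObj_mvPolynomial (σ : Type u) [Finite σ] :
    IsFinitelyPresentedObj (of R (MvPolynomial σ R)) :=
  have : PreservesFilteredColimits (coyoneda.obj (op σ)) := isFinitelyPresentedObj_of_finite σ
  ⟨fun _ => preservesColimitsOfShape_of_natIso (coyonedaMvPolynomialIso R σ).symm⟩

end CommAlgCat'

/-- For a commutative ring `R` and `n : ℕ`, the polynomial algebra `R[x₁,…,xₙ]` is a
finitely presented object of the category `CommAlgCat R` of commutative `R`-algebras. -/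
theorem mvPolynomial_isFinitelyPresentedObj (R : Type u) [CommRing R] (n : ℕ) :
    CategoryTheory.IsFinitelyPresentedObj (CommAlgCat'.of R (MvPolynomial (Fin n) R)) :=
  -- `Fin n` lives in `Type`, not `Type u`, hence the detour through `ULift`.
  (CommAlgCat'.isFinitelyPresentedObj_mvPolynomial R (ULift (Fin n))).of_iso
    (ObjectProperty.isoMk _ (MvPolynomial.renameEquiv R Equiv.ulift).toAlgebraIso)
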